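/- Let g = g_{5,3,5(λ)}. For every F ∈ g*, the skew-symmetric bilinear form B_F has rank either 0 or 2; equivalently, the subspace {X ∈ g : F([X, Y]) = 0 for all Y ∈ g} has dimension 5 or 3. (This is the infinitesimal MD-condition: every coadjoint orbit of the corresponding connected simply connected Lie group G_{5,3,5(λ)} has dimension 0 or 2, so it is an MD5-group.) -/

import Mathlib

/-!
Writing `X₂*` for the second coordinate functional, the structure constants give
`F([X, Y]) = X₂*(X) φ(Y) - φ(X) X₂*(Y)` with `φ = F ∘ ad X₂`, i.e. `B_F = X₂* ∧ φ`.
Since `φ(X₂) = 0`, the forms `X₂*` and `φ` are linearly independent unless `φ = 0`, so `B_F`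
has rank `2` or `0`. The radical of `B_F` is the kernel of the transposed matrix, hence has
dimension `5 - rank B_F`.
-/

open scoped Matrix

def bracketg535 (l : ℝ) (U V : Fin 5 → ℝ) : Fin 5 → ℝ :=
  ![0, 0,
    (U 0 * V 1 - U 1 * V 0) + l * (U 1 * V 2 - U 2 * V 1),
    (U 1 * V 3 - U 3 * V 1) + (U 1 * V 4 - U 4 * V 1),
    U 1 * V 4 - U 4 * V 1]

def BFg535 (l : ℝ) (F : Fin 5 → ℝ) : Matrix (Fin 5) (Fin 5) ℝ :=
  Matrix.of fun i j => F ⬝ᵥ bracketg535 l (Pi.single i 1) (Pi.single j 1)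

def radg535 (l : ℝ) (F : Fin 5 → ℝ) : Submodule ℝ (Fin 5 → ℝ) where
  carrier := {X | ∀ Y : Fin 5 → ℝ, F ⬝ᵥ bracketg535 l X Y = 0}
  zero_mem' := by
    intro Y
    simp [bracketg535, dotProduct, Fin.sum_univ_five]
  add_mem' := by
    intro a b ha hb Y
    have h1 := ha Y
    have h2 := hb Y
    simp only [bracketg535, dotProduct, Fin.sum_univ_five, Matrix.cons_val_zero,
      Matrix.cons_val_one, Matrix.head_cons, Matrix.cons_val_two, Matrix.tail_cons,
      Matrix.cons_val_three, Matrix.cons_val_four, Pi.add_apply] at h1 h2 ⊢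
    linear_combination h1 + h2
  smul_mem' := by
    intro c a ha Y
    have h1 := ha Y
    simp only [bracketg535, dotProduct, Fin.sum_univ_five, Matrix.cons_val_zero,
      Matrix.cons_val_one, Matrix.head_cons, Matrix.cons_val_two, Matrix.tail_cons,
      Matrix.cons_val_three, Matrix.cons_val_four, Pi.smul_apply, smul_eq_mul] at h1 ⊢
    linear_combination c * h1

open Module

namespace Matrix

variable {K m n : Type*} [Field K]

theorem rank_add_finrank_ker_mulVecLin [Fintype n] (A : Matrix m n K) :
    A.rank + finrank K (LinearMap.ker A.mulVecLin) = Fintype.card n := by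
  rw [rank, LinearMap.finrank_range_add_finrank_ker, finrank_fintype_fun_eq_card]

theorem mem_ker_transpose_mulVecLin_iff [Fintype n] (A : Matrix n n K) (x : n → K) :
    x ∈ LinearMap.ker Aᵀ.mulVecLin ↔ ∀ y, x ⬝ᵥ A *ᵥ y = 0 := by
  simp only [LinearMap.mem_ker, mulVecLin_apply, mulVec_transpose, dotProduct_mulVec,
    dotProduct_eq_zero_iff]

def wedge (u v : n → K) : Matrix n n K :=
  vecMulVec u v - vecMulVec v u

theorem wedge_apply (u v : n → K) (i j : n) : wedge u v i j = u i * v j - v i * u j := rfl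

theorem wedge_mulVec [Fintype n] (u v x : n → K) :
    wedge u v *ᵥ x = (v ⬝ᵥ x) • u - (u ⬝ᵥ x) • v := by
  simp only [wedge, sub_mulVec, vecMulVec_mulVec, op_smul_eq_smul]

theorem dotProduct_wedge_mulVec [Fintype n] (u v x y : n → K) :
    x ⬝ᵥ wedge u v *ᵥ y = (x ⬝ᵥ u) * (v ⬝ᵥ y) - (x ⬝ᵥ v) * (u ⬝ᵥ y) := by
  rw [wedge_mulVec, dotProduct_sub, dotProduct_smul, dotProduct_smul, smul_eq_mul, smul_eq_mul]
  ring

theorem ker_wedge_mulVecLin [Fintype n] {u v : n → K} (huv : LinearIndependent K ![u, v]) :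
    LinearMap.ker (wedge u v).mulVecLin = LinearMap.ker (of ![u, v]).mulVecLin := by
  ext x
  simp only [LinearMap.mem_ker, mulVecLin_apply, wedge_mulVec, funext_iff, Fin.forall_fin_two]
  constructor
  · intro h
    have := LinearIndependent.pair_iff.mp huv (v ⬝ᵥ x) (-(u ⬝ᵥ x))
      (by rw [neg_smul, ← sub_eq_add_neg]; exact funext h)
    simp_all [mulVec]
  · rintro ⟨hu, hv⟩ i
    simp_all [mulVec]

theorem rank_wedge [Fintype n] {u v : n → K} (huv : LinearIndependent K ![u, v]) :
    (wedge u v).rank = 2 := by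
  have hw := (wedge u v).rank_add_finrank_ker_mulVecLin
  have hA := (of ![u, v]).rank_add_finrank_ker_mulVecLin
  rw [ker_wedge_mulVecLin huv] at hw
  rw [LinearIndependent.rank_matrix (M := of ![u, v]) huv, Fintype.card_fin] at hA
  omega

end Matrix

theorem linearIndependent_single_one_pair {K n : Type*} [Field K] [DecidableEq n] {i : n}
    {v : n → K} (hvi : v i = 0) (hv : v ≠ 0) : LinearIndependent K ![Pi.single i 1, v] := by
  refine LinearIndependent.pair_iff.mpr fun s t hst => ?_
  have hs : s = 0 := by simpa [hvi] using congrFun hst i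
  subst hs
  exact ⟨rfl, (smul_eq_zero.mp (by simpa using hst)).resolve_right hv⟩

open Matrix

-- the coordinates of the functional `F ∘ ad X₂`
def dualAdX2g535 (l : ℝ) (F : Fin 5 → ℝ) : Fin 5 → ℝ :=
  ![-F 2, 0, l * F 2, F 3, F 3 + F 4]

theorem dotProduct_bracketg535 (l : ℝ) (F X Y : Fin 5 → ℝ) :
    F ⬝ᵥ bracketg535 l X Y =
      (X ⬝ᵥ Pi.single 1 1) * (dualAdX2g535 l F ⬝ᵥ Y) -
        (X ⬝ᵥ dualAdX2g535 l F) * (Pi.single 1 1 ⬝ᵥ Y) := by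
  rw [dotProduct_single, single_dotProduct, mul_one, one_mul]
  simp only [bracketg535, dualAdX2g535, dotProduct, Fin.sum_univ_five, cons_val]
  ring

theorem BFg535_eq_wedge (l : ℝ) (F : Fin 5 → ℝ) :
    BFg535 l F = wedge (Pi.single 1 1) (dualAdX2g535 l F) := by
  ext i j
  simp only [BFg535, of_apply, dotProduct_bracketg535, single_dotProduct, dotProduct_single,
    wedge_apply, one_mul, mul_one]
  congr 2
  simp only [Pi.single_apply, eq_comm]

theorem radg535_eq_ker (l : ℝ) (F : Fin 5 → ℝ) :
    radg535 l F = LinearMap.ker (BFg535 l F)ᵀ.mulVecLin := by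
  ext X
  rw [mem_ker_transpose_mulVecLin_iff, BFg535_eq_wedge]
  simp only [dotProduct_wedge_mulVec, ← dotProduct_bracketg535]
  rfl

theorem rank_BFg535 (l : ℝ) (F : Fin 5 → ℝ) :
    (BFg535 l F).rank = 0 ∨ (BFg535 l F).rank = 2 := by
  rw [BFg535_eq_wedge]
  rcases eq_or_ne (dualAdX2g535 l F) 0 with h | h
  · left
    simp [h, wedge, rank_zero]
  · exact Or.inr (rank_wedge (linearIndependent_single_one_pair rfl h))

theorem md_condition_g535_general (l : ℝ) (F : Fin 5 → ℝ) :
    ((BFg535 l F).rank = 0 ∨ (BFg535 l F).rank = 2) ∧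
    (Module.finrank ℝ (radg535 l F) = 5 ∨ Module.finrank ℝ (radg535 l F) = 3) := by
  have hrad : (BFg535 l F).rank + finrank ℝ (radg535 l F) = 5 := by
    rw [radg535_eq_ker, ← rank_transpose, rank_add_finrank_ker_mulVecLin, Fintype.card_fin]
  have := rank_BFg535 l F
  omega

/-- For every functional F, the skew-symmetric form B_F has rank 0 or 2; equivalently,
its radical {X | F([X, Y]) = 0 for all Y} has dimension 5 or 3 (the infinitesimal
MD-condition: every coadjoint orbit has dimension 0 or 2). -/
theorem md_condition_g535 (l : ℝ) (hl1 : l ≠ 1) (F : Fin 5 → ℝ) :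
    ((BFg535 l F).rank = 0 ∨ (BFg535 l F).rank = 2) ∧
    (Module.finrank ℝ (radg535 l F) = 5 ∨ Module.finrank ℝ (radg535 l F) = 3) :=
  md_condition_g535_general l F
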